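/- Let U be a Lipschitz subdomain of the unit disc D. Then U is degenerate in D: for every sequence {f_j} of holomorphic self-maps of D with f_j(D) ⊆ U, every limit of the iterated function system {f_j ∘ ⋯ ∘ f_1} in the compact-open topology is constant. -/

import Mathlib

open Metric Set Filter
open scoped ENNReal NNReal

noncomputable section

/-- The open unit disc in `ℂ`. -/
def uDisc : Set ℂ := Metric.ball 0 1

/-- The inverse hyperbolic tangent. -/
def artanh (x : ℝ) : ℝ := Real.log ((1 + x) / (1 - x)) / 2

/-- The Poincaré (hyperbolic) distance on the unit disc. -/
def pDist (ζ η : ℂ) : ℝ :=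
  artanh ‖(ζ - η) / (1 - (starRingEnd ℂ) ζ * η)‖

/-- Hyperbolic ball in the unit disc. -/
def hBall (z : ℂ) (r : ℝ) : Set ℂ := {w ∈ uDisc | pDist w z < r}

/-- Bloch radius of a subset of the unit disc. -/
def blochRadiusD (U : Set ℂ) : ℝ≥0∞ :=
  ⨆ (r : NNReal) (_ : ∃ z ∈ uDisc, hBall z (r : ℝ) ⊆ U), (r : ℝ≥0∞)

/-- `tanh` extended to `ℝ≥0∞`, with `tanh ∞ = 1`. -/
def tanhE (x : ℝ≥0∞) : ℝ := if x = ⊤ then 1 else Real.tanh x.toReal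

variable {E : Type*} [NormedAddCommGroup E] [NormedSpace ℂ E]

/-- Admissible values for the Lempert function of `D` between `z` and `w`. -/
def lemSet (D : Set E) (z w : E) : Set ℝ :=
  {c | ∃ (f : ℂ → E) (ζ : ℂ), DifferentiableOn ℂ f uDisc ∧ MapsTo f uDisc D ∧
    f 0 = z ∧ ζ ∈ uDisc ∧ f ζ = w ∧ c = pDist 0 ζ}

/-- The Kobayashi (pseudo)distance of `D`, defined via chains of analytic discs. -/
def kDist (D : Set E) (z w : E) : ℝ :=
  sInf {s | ∃ (m : ℕ) (p : ℕ → E), p 0 = z ∧ p m = w ∧ (∀ i, i ≤ m → p i ∈ D) ∧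
      s = ∑ i ∈ Finset.range m, sInf (lemSet D (p i) (p (i + 1)))}

/-- Kobayashi ball of center `z` and radius `r` in `D`. -/
def kBall (D : Set E) (z : E) (r : ℝ) : Set E := {w ∈ D | kDist D w z < r}

/-- Bloch radius of `X ⊆ D` with respect to the Kobayashi distance of `D`. -/
def blochRadius (D X : Set E) : ℝ≥0∞ :=
  ⨆ (r : NNReal) (_ : ∃ z ∈ D, kBall D z (r : ℝ) ⊆ X), (r : ℝ≥0∞)

/-- The Kobayashi infinitesimal (pseudo)metric of `D`. -/
def kMetric (D : Set E) (z v : E) : ℝ :=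
  sInf {c | ∃ (f : ℂ → E) (r : ℝ), DifferentiableOn ℂ f uDisc ∧ MapsTo f uDisc D ∧
    f 0 = z ∧ 0 < r ∧ deriv f 0 = r • v ∧ c = 1 / r}

/-- The hyperbolic Lipschitz constant `μ_D(X)` of `X` inside `D`. -/
def lipConst (D X : Set E) : ℝ :=
  sSup {t | ∃ z ∈ X, ∃ v : E, v ≠ 0 ∧ t = kMetric D z v / kMetric X z v}

/-- `comps f j = f j ∘ ⋯ ∘ f 0`, the iterated function system associated to `f`. -/
def comps (f : ℕ → E → E) : ℕ → E → E
  | 0 => f 0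
  | (j + 1) => f (j + 1) ∘ comps f j

/-- `F` is a limit, in the compact-open topology on `D`, of a subsequence of the
iterated function system associated to `f`. -/
def IFSLimit (D : Set E) (f : ℕ → E → E) (F : E → E) : Prop :=
  ∃ s : ℕ → ℕ, StrictMono s ∧
    TendstoLocallyUniformlyOn (fun j => comps f (s j)) F atTop D

/-- `X ⊆ D` is degenerate in `D`: every limit of every iterated function system of
holomorphic self-maps of `D` with image in `X` is constant. -/
def Degenerate (D X : Set E) : Prop :=
  ∀ f : ℕ → E → E, (∀ j, DifferentiableOn ℂ (f j) D ∧ MapsTo (f j) D X) →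
    ∀ F : E → E, IFSLimit D f F → ∃ c, ∀ z ∈ D, F z = c

/-- A complex geodesic of `D`: a holomorphic isometry from the Poincaré distance of
the unit disc to the Kobayashi distance of `D`. -/
def IsComplexGeodesic (D : Set E) (φ : ℂ → E) : Prop :=
  DifferentiableOn ℂ φ uDisc ∧ MapsTo φ uDisc D ∧
    ∀ ζ ∈ uDisc, ∀ η ∈ uDisc, kDist D (φ ζ) (φ η) = pDist ζ η

/-- A Lempert projection associated to the complex geodesic `φ`: a holomorphic
retraction of `D` onto `φ(𝔻)` with affine fibers. -/
def IsLempertProjection (D : Set E) (φ : ℂ → E) (ρ : E → E) : Prop :=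
  DifferentiableOn ℂ ρ D ∧ MapsTo ρ D (φ '' uDisc) ∧
    (∀ z ∈ D, ρ (ρ z) = ρ z) ∧ (∀ ζ ∈ uDisc, ρ (φ ζ) = φ ζ) ∧
    ∀ ζ ∈ uDisc, ∃ (L : E →ₗ[ℂ] ℂ) (c : ℂ), L ≠ 0 ∧
      {w ∈ D | ρ w = φ ζ} = {w ∈ D | L w = c}

/-- A Lempert projection device `(φ, ρ, ρ̃)`: a complex geodesic, an associated
Lempert projection, and the left inverse `ρ̃ = φ⁻¹ ∘ ρ`. -/
def IsLempertDevice (D : Set E) (φ : ℂ → E) (ρ : E → E) (ρt : E → ℂ) : Prop :=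
  IsComplexGeodesic D φ ∧ IsLempertProjection D φ ρ ∧
    ∀ z ∈ D, ρt z ∈ uDisc ∧ φ (ρt z) = ρ z

/-- `X` is 1-Bloch in `D`: there is `C > 0` such that for every Lempert projection
device, `ρ̃(X)` is contained in a Bloch subdomain of the disc of Bloch radius `< C`. -/
def OneBloch (D X : Set E) : Prop :=
  ∃ C > (0 : ℝ), ∀ (φ : ℂ → E) (ρ : E → E) (ρt : E → ℂ),
    IsLempertDevice D φ ρ ρt → ∃ U : Set ℂ, IsOpen U ∧ IsConnected U ∧ U ⊆ uDisc ∧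
      ρt '' X ⊆ U ∧ blochRadiusD U < ENNReal.ofReal C

/-- `X` is c-Bloch in `D`: there is `C > 0` such that for every Lempert projection
device, `ρ̃(X ∩ φ(𝔻))` is contained in a Bloch subdomain of Bloch radius `≤ C`. -/
def CBloch (D X : Set E) : Prop :=
  ∃ C > (0 : ℝ), ∀ (φ : ℂ → E) (ρ : E → E) (ρt : E → ℂ),
    IsLempertDevice D φ ρ ρt → ∃ U : Set ℂ, IsOpen U ∧ IsConnected U ∧ U ⊆ uDisc ∧
      ρt '' (X ∩ φ '' uDisc) ⊆ U ∧ blochRadiusD U ≤ ENNReal.ofReal C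

/-
A holomorphic map `h : 𝔻 → U` does not increase Kobayashi metrics, so
`κ_𝔻(h z; h' z v) ≤ μ κ_U(h z; h' z v) ≤ μ κ_𝔻(z; v)` with `μ = μ_𝔻(U) < 1`.
Iterating, `κ_𝔻` contracts by `μ ^ (j + 1)` along `f_j ∘ ⋯ ∘ f_0`; comparing `κ_𝔻` with the
Euclidean metric on both sides gives `|(f_j ∘ ⋯ ∘ f_0)'(z)| ≤ 2 μ ^ (j + 1) / (1 - |z|)`.
Hence every locally uniform limit has vanishing derivative on `𝔻`, so it is constant.
-/

open Topology

lemma mem_uDisc_iff {z : ℂ} : z ∈ uDisc ↔ ‖z‖ < 1 := mem_ball_zero_iff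

lemma isOpen_uDisc : IsOpen uDisc := isOpen_ball

lemma zero_mem_uDisc : (0 : ℂ) ∈ uDisc := mem_ball_self one_pos

def kMetricSet (D : Set E) (z v : E) : Set ℝ :=
  {c | ∃ (f : ℂ → E) (r : ℝ), DifferentiableOn ℂ f uDisc ∧ MapsTo f uDisc D ∧
    f 0 = z ∧ 0 < r ∧ deriv f 0 = r • v ∧ c = 1 / r}

lemma kMetricSet_bddBelow (D : Set E) (z v : E) : BddBelow (kMetricSet D z v) :=
  ⟨0, by rintro _ ⟨f, r, -, -, -, hr, -, rfl⟩; positivity⟩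

lemma kMetric_nonneg (D : Set E) (z v : E) : 0 ≤ kMetric D z v :=
  Real.sInf_nonneg (by rintro _ ⟨f, r, -, -, -, hr, -, rfl⟩; positivity)

section Disc

variable {D X : Set ℂ} {z v : ℂ}

/-- Witnessed by the affine disc `ζ ↦ z + ζ r v`. -/
lemma one_div_mem_kMetricSet {r : ℝ} (hr : 0 < r) (hz : z ∈ D) (hball : ball z (r * ‖v‖) ⊆ D) :
    1 / r ∈ kMetricSet D z v := by
  have hderiv : HasDerivAt (fun ζ : ℂ => z + ζ * (r * v)) (r • v) 0 := by
    simpa [Complex.real_smul] using ((hasDerivAt_id (0 : ℂ)).mul_const ((r : ℂ) * v)).const_add z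
  refine ⟨fun ζ => z + ζ * (r * v), r, ?_, ?_, by simp, hr, hderiv.deriv, rfl⟩
  · exact (differentiable_id.mul_const _).const_add _ |>.differentiableOn
  · intro ζ hζ
    rcases eq_or_ne v 0 with rfl | hv
    · simpa using hz
    apply hball
    rw [mem_ball, dist_eq_norm, add_sub_cancel_left, norm_mul, norm_mul, Complex.norm_real,
      Real.norm_of_nonneg hr.le]
    exact mul_lt_of_lt_one_left (by positivity) (mem_uDisc_iff.mp hζ)

lemma kMetric_le_one_div {r : ℝ} (hr : 0 < r) (hz : z ∈ D) (hball : ball z (r * ‖v‖) ⊆ D) :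
    kMetric D z v ≤ 1 / r :=
  csInf_le (kMetricSet_bddBelow D z v) (one_div_mem_kMetricSet hr hz hball)

lemma kMetricSet_nonempty (hD : IsOpen D) (hz : z ∈ D) (v : ℂ) :
    (kMetricSet D z v).Nonempty := by
  obtain ⟨δ, hδ, hball⟩ := Metric.isOpen_iff.mp hD z hz
  have hr : 0 < δ / (‖v‖ + 1) := by positivity
  refine ⟨_, one_div_mem_kMetricSet hr hz ((ball_subset_ball ?_).trans hball)⟩
  rw [div_mul_eq_mul_div, div_le_iff₀ (by positivity)]
  nlinarith

lemma kMetric_zero (hz : z ∈ D) : kMetric D z 0 = 0 := by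
  refine le_antisymm (le_of_forall_pos_le_add fun ε hε => ?_) (kMetric_nonneg D z 0)
  simpa using kMetric_le_one_div (v := 0) (one_div_pos.mpr hε) hz (by simp)

lemma kMetric_uDisc_le (hz : z ∈ uDisc) (v : ℂ) : kMetric uDisc z v ≤ ‖v‖ / (1 - ‖z‖) := by
  rcases eq_or_ne v 0 with rfl | hv
  · simp [kMetric_zero hz]
  have hz1 := mem_uDisc_iff.mp hz
  have hv0 : 0 < ‖v‖ := norm_pos_iff.mpr hv
  have hball : ball z ((1 - ‖z‖) / ‖v‖ * ‖v‖) ⊆ uDisc := by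
    rw [div_mul_cancel₀ _ hv0.ne']
    exact ball_subset_ball' (by rw [dist_zero_right]; linarith)
  simpa [one_div_div] using kMetric_le_one_div (div_pos (by linarith) hv0) hz hball

/-- The Cauchy estimate for a disc `g : 𝔻 → D ⊆ 𝔻`, whose image lies in `ball (g 0) 2`. -/
lemma norm_div_two_le_of_mem_kMetricSet (hD : D ⊆ uDisc) {c : ℝ} (hc : c ∈ kMetricSet D z v) :
    ‖v‖ / 2 ≤ c := by
  obtain ⟨g, r, hg, hgD, hg0, hr, hg', rfl⟩ := hc
  have hmaps : MapsTo g (ball 0 1) (closedBall (g 0) 2) := by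
    intro ζ hζ
    have h1 := mem_uDisc_iff.mp (hD (hgD hζ))
    have h2 := mem_uDisc_iff.mp (hD (hgD zero_mem_uDisc))
    rw [mem_closedBall, dist_eq_norm]
    linarith [norm_sub_le (g ζ) (g 0)]
  have hcauchy := Complex.norm_deriv_le_div_of_mapsTo_ball hg hmaps one_pos
  rw [hg', norm_smul, Real.norm_of_nonneg hr.le, div_one] at hcauchy
  rw [div_le_div_iff₀ two_pos hr]
  linarith

lemma norm_div_two_le_kMetric (hDo : IsOpen D) (hD : D ⊆ uDisc) (hz : z ∈ D) (v : ℂ) :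
    ‖v‖ / 2 ≤ kMetric D z v :=
  le_csInf (kMetricSet_nonempty hDo hz v) fun _ hc => norm_div_two_le_of_mem_kMetricSet hD hc

lemma kMetric_map_le (hD : IsOpen D) {h : ℂ → ℂ} (hh : DifferentiableOn ℂ h D)
    (hmaps : MapsTo h D X) (hz : z ∈ D) (w : ℂ) :
    kMetric X (h z) (deriv h z * w) ≤ kMetric D z w := by
  apply csInf_le_csInf (kMetricSet_bddBelow X _ _) (kMetricSet_nonempty hD hz w)
  rintro _ ⟨g, r, hg, hgD, rfl, hr, hg', rfl⟩
  refine ⟨h ∘ g, r, hh.comp hg hgD, hmaps.comp hgD, rfl, hr, ?_, rfl⟩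
  rw [deriv_comp _ (hh.differentiableAt (hD.mem_nhds hz))
    (hg.differentiableAt (isOpen_uDisc.mem_nhds zero_mem_uDisc)), hg', Complex.real_smul,
    Complex.real_smul]
  ring

lemma kMetric_anti {D' : Set ℂ} (hD : IsOpen D) (hDD' : D ⊆ D') (hz : z ∈ D) (v : ℂ) :
    kMetric D' z v ≤ kMetric D z v := by
  simpa using kMetric_map_le hD differentiableOn_id (fun _ hx => hDD' hx) hz v

end Disc

section Lipschitz

variable {X : Set ℂ} {z : ℂ}

lemma lipConst_set_bddAbove (hXo : IsOpen X) (hX : X ⊆ uDisc) :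
    BddAbove {t | ∃ z ∈ X, ∃ v : ℂ, v ≠ 0 ∧ t = kMetric uDisc z v / kMetric X z v} :=
  ⟨1, by
    rintro _ ⟨z, hz, v, -, rfl⟩
    exact div_le_one_of_le₀ (kMetric_anti hXo hX hz v) (kMetric_nonneg X z v)⟩

lemma kMetric_div_kMetric_le_lipConst (hXo : IsOpen X) (hX : X ⊆ uDisc) (hz : z ∈ X)
    {v : ℂ} (hv : v ≠ 0) : kMetric uDisc z v / kMetric X z v ≤ lipConst uDisc X :=
  le_csSup (lipConst_set_bddAbove hXo hX) ⟨z, hz, v, hv, rfl⟩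

lemma lipConst_nonneg (hXo : IsOpen X) (hX : X ⊆ uDisc) (hz : z ∈ X) : 0 ≤ lipConst uDisc X :=
  (div_nonneg (kMetric_nonneg _ _ _) (kMetric_nonneg _ _ _)).trans
    (kMetric_div_kMetric_le_lipConst hXo hX hz one_ne_zero)

lemma kMetric_uDisc_le_lipConst_mul (hXo : IsOpen X) (hX : X ⊆ uDisc) (hz : z ∈ X) (v : ℂ) :
    kMetric uDisc z v ≤ lipConst uDisc X * kMetric X z v := by
  rcases eq_or_ne v 0 with rfl | hv
  · rw [kMetric_zero (hX hz)]
    exact mul_nonneg (lipConst_nonneg hXo hX hz) (kMetric_nonneg X z 0)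
  have hpos : 0 < kMetric X z v :=
    (div_pos (norm_pos_iff.mpr hv) two_pos).trans_le (norm_div_two_le_kMetric hXo hX hz v)
  exact (div_le_iff₀ hpos).mp (kMetric_div_kMetric_le_lipConst hXo hX hz hv)

lemma kMetric_map_le_lipConst_mul (hXo : IsOpen X) (hX : X ⊆ uDisc) {h : ℂ → ℂ}
    (hh : DifferentiableOn ℂ h uDisc) (hmaps : MapsTo h uDisc X) (hz : z ∈ uDisc) (w : ℂ) :
    kMetric uDisc (h z) (deriv h z * w) ≤ lipConst uDisc X * kMetric uDisc z w :=
  (kMetric_uDisc_le_lipConst_mul hXo hX (hmaps hz) _).trans <|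
    mul_le_mul_of_nonneg_left (kMetric_map_le isOpen_uDisc hh hmaps hz w)
      (lipConst_nonneg hXo hX (hmaps hz))

end Lipschitz

lemma mapsTo_comps {α : Type*} {D X : Set α} {f : ℕ → α → α} (hX : X ⊆ D)
    (hf : ∀ j, MapsTo (f j) D X) (j : ℕ) : MapsTo (comps f j) D X := by
  induction j with
  | zero => exact hf 0
  | succ j ih => exact (hf (j + 1)).comp (ih.mono_right hX)

lemma differentiableOn_comps {D X : Set E} {f : ℕ → E → E} (hX : X ⊆ D)
    (hf : ∀ j, DifferentiableOn ℂ (f j) D ∧ MapsTo (f j) D X) (j : ℕ) :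
    DifferentiableOn ℂ (comps f j) D := by
  induction j with
  | zero => exact (hf 0).1
  | succ j ih =>
    exact (hf (j + 1)).1.comp ih ((mapsTo_comps hX (fun i => (hf i).2) j).mono_right hX)

section Iteration

variable {X : Set ℂ} {f : ℕ → ℂ → ℂ} {z : ℂ}

lemma kMetric_comps_le (hXo : IsOpen X) (hX : X ⊆ uDisc)
    (hf : ∀ j, DifferentiableOn ℂ (f j) uDisc ∧ MapsTo (f j) uDisc X) (j : ℕ)
    (hz : z ∈ uDisc) (w : ℂ) :
    kMetric uDisc (comps f j z) (deriv (comps f j) z * w)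
      ≤ lipConst uDisc X ^ (j + 1) * kMetric uDisc z w := by
  induction j generalizing w with
  | zero => simpa [comps] using kMetric_map_le_lipConst_mul hXo hX (hf 0).1 (hf 0).2 hz w
  | succ j ih =>
    have hjz : comps f j z ∈ uDisc := hX (mapsTo_comps hX (fun i => (hf i).2) j hz)
    have hderiv : deriv (comps f (j + 1)) z =
        deriv (f (j + 1)) (comps f j z) * deriv (comps f j) z :=
      deriv_comp z ((hf (j + 1)).1.differentiableAt (isOpen_uDisc.mem_nhds hjz))
        ((differentiableOn_comps hX hf j).differentiableAt (isOpen_uDisc.mem_nhds hz))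
    calc kMetric uDisc (comps f (j + 1) z) (deriv (comps f (j + 1)) z * w)
        = kMetric uDisc (f (j + 1) (comps f j z))
            (deriv (f (j + 1)) (comps f j z) * (deriv (comps f j) z * w)) := by
          rw [hderiv, mul_assoc]; rfl
      _ ≤ lipConst uDisc X * kMetric uDisc (comps f j z) (deriv (comps f j) z * w) :=
          kMetric_map_le_lipConst_mul hXo hX (hf (j + 1)).1 (hf (j + 1)).2 hjz _
      _ ≤ lipConst uDisc X * (lipConst uDisc X ^ (j + 1) * kMetric uDisc z w) :=
          mul_le_mul_of_nonneg_left (ih w) (lipConst_nonneg hXo hX ((hf 0).2 hz))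
      _ = lipConst uDisc X ^ (j + 1 + 1) * kMetric uDisc z w := by ring

lemma norm_deriv_comps_le (hXo : IsOpen X) (hX : X ⊆ uDisc)
    (hf : ∀ j, DifferentiableOn ℂ (f j) uDisc ∧ MapsTo (f j) uDisc X) (j : ℕ) (hz : z ∈ uDisc) :
    ‖deriv (comps f j) z‖ ≤ 2 / (1 - ‖z‖) * lipConst uDisc X ^ (j + 1) := by
  have hjz : comps f j z ∈ uDisc := hX (mapsTo_comps hX (fun i => (hf i).2) j hz)
  have hμ : 0 ≤ lipConst uDisc X ^ (j + 1) := pow_nonneg (lipConst_nonneg hXo hX ((hf 0).2 hz)) _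
  calc ‖deriv (comps f j) z‖ = 2 * (‖deriv (comps f j) z * 1‖ / 2) := by rw [mul_one]; ring
    _ ≤ 2 * kMetric uDisc (comps f j z) (deriv (comps f j) z * 1) := by
        gcongr; exact norm_div_two_le_kMetric isOpen_uDisc subset_rfl hjz _
    _ ≤ 2 * (lipConst uDisc X ^ (j + 1) * kMetric uDisc z 1) := by
        gcongr; exact kMetric_comps_le hXo hX hf j hz 1
    _ ≤ 2 * (lipConst uDisc X ^ (j + 1) * (‖(1 : ℂ)‖ / (1 - ‖z‖))) := by
        gcongr; exact kMetric_uDisc_le hz 1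
    _ = 2 / (1 - ‖z‖) * lipConst uDisc X ^ (j + 1) := by simp; ring

lemma tendsto_deriv_comps_zero (hXo : IsOpen X) (hX : X ⊆ uDisc) (hlip : lipConst uDisc X < 1)
    (hf : ∀ j, DifferentiableOn ℂ (f j) uDisc ∧ MapsTo (f j) uDisc X) {s : ℕ → ℕ}
    (hs : Tendsto s atTop atTop) (hz : z ∈ uDisc) :
    Tendsto (fun j => deriv (comps f (s j)) z) atTop (𝓝 0) := by
  have hpow : Tendsto (fun j => lipConst uDisc X ^ (s j + 1)) atTop (𝓝 0) :=
    (tendsto_pow_atTop_nhds_zero_of_lt_one (lipConst_nonneg hXo hX ((hf 0).2 hz)) hlip).comp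
      ((tendsto_add_atTop_nat 1).comp hs)
  refine squeeze_zero_norm (fun j => norm_deriv_comps_le hXo hX hf (s j) hz) ?_
  simpa using hpow.const_mul (2 / (1 - ‖z‖))

end Iteration

theorem stmt3_general (U : Set ℂ) (hUo : IsOpen U) (hUD : U ⊆ uDisc)
    (hLip : lipConst uDisc U < 1) :
    Degenerate uDisc U := by
  rintro f hf F ⟨s, hs, hF⟩
  have hdiff : ∀ᶠ j in atTop, DifferentiableOn ℂ (comps f (s j)) uDisc :=
    Eventually.of_forall fun j => differentiableOn_comps hUD hf (s j)
  have hF' : EqOn (deriv F) 0 uDisc := fun z hz =>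
    tendsto_nhds_unique ((hF.deriv hdiff isOpen_uDisc).tendsto_at hz)
      (tendsto_deriv_comps_zero hUo hUD hLip hf hs.tendsto_atTop hz)
  exact isOpen_uDisc.exists_is_const_of_deriv_eq_zero (convex_ball 0 1).isPreconnected
    (hF.differentiableOn hdiff isOpen_uDisc) hF'

/-- a Lipschitz subdomain of the unit disc is degenerate. -/
theorem stmt3 (U : Set ℂ) (hUo : IsOpen U) (hUc : IsConnected U) (hUD : U ⊆ uDisc)
    (hLip : lipConst uDisc U < 1) :
    Degenerate uDisc U :=
  stmt3_general U hUo hUD hLip
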